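/- arXiv:1706.01661 — 2 statements merged into one kernel-verified Lean document; each statement's English description precedes it below -/
import Mathlib

section
/- Mollification does not increase the entropy functional: let h₀ be a nonnegative Borel measure on 𝕋³ and U₀ an ℝ⁴-valued Borel measure on 𝕋³, and let ρ_ε be a smooth positive probability density on 𝕋³ (obtained by periodizing a Gaussian). Set h₀^ε = h₀ * ρ_ε and U₀^ε = U₀ * ρ_ε. Then Λ(h₀^ε, U₀^ε) ≤ Λ(h₀, U₀), where Λ(ρ,U) = sup{∫ a dρ + ∫ A·dU : a + |A|²/2 ≤ 0, (a,A) continuous}. -/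
open MeasureTheory
noncomputable section

/-- The 3-torus `𝕋³ = ℝ³/ℤ³`. -/
abbrev T3 : Type := UnitAddCircle × UnitAddCircle × UnitAddCircle

/-- Pairing of a signed (Borel) measure with a function, `∫ f ds`. -/
def pairSM {α : Type*} [MeasurableSpace α] (s : SignedMeasure α) (f : α → ℝ) : ℝ :=
  ∫ x, f x ∂s.toJordanDecomposition.posPart - ∫ x, f x ∂s.toJordanDecomposition.negPart

/-- The entropy functional `Λ`, defined by duality from abstract pairings
`Ph : C(𝕋³,ℝ)' ` and `PU : C(𝕋³,ℝ⁴)'`: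
`Λ = sup { ⟨Ph, a⟩ + ⟨PU, A⟩ : (a,A) continuous, a + |A|²/2 ≤ 0 }`. -/
def LamGen (Ph : (T3 → ℝ) → ℝ) (PU : Fin 4 → (T3 → ℝ) → ℝ) : EReal :=
  sSup { r : EReal | ∃ (a : C(T3, ℝ)) (A : Fin 4 → C(T3, ℝ)),
    (∀ x, a x + (∑ i, (A i x)^2) / 2 ≤ 0) ∧
    r = ((Ph ⇑a + ∑ i, PU i ⇑(A i) : ℝ) : EReal) }

/-- `Λ(ρ,U)` for a (nonnegative) Borel measure `ρ` and an `ℝ⁴`-valued Borel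
measure `U` (given componentwise as signed measures) on the 3-torus. -/
def Lam (ρ : Measure T3) (U : Fin 4 → SignedMeasure T3) : EReal :=
  LamGen (fun f => ∫ x, f x ∂ρ) (fun i f => pairSM (U i) f)

/-! ### Auxiliary instances and lemmas -/

instance : (volume : Measure (UnitAddCircle × UnitAddCircle)).IsAddLeftInvariant :=
  Measure.prod.instIsAddLeftInvariant

instance : (volume : Measure T3).IsAddLeftInvariant :=
  Measure.prod.instIsAddLeftInvariant

instance : BorelSpace (T3 × T3) := Prod.borelSpace

instance : MeasurableAdd₂ T3 := ContinuousAdd.measurableMul₂ (γ := T3)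
instance : MeasurableSub₂ T3 := ContinuousSub.measurableSub₂

instance : (volume : Measure T3).IsAddRightInvariant :=
  MeasureTheory.IsAddLeftInvariant.isAddRightInvariant (μ := (volume : Measure T3))

/-- Continuous functions on the compact space `T3` are integrable w.r.t. finite measures. -/
lemma contIntegrable {f : T3 → ℝ} (hf : Continuous f) (μ : Measure T3) [IsFiniteMeasure μ] :
    Integrable f μ :=
  hf.integrable_of_hasCompactSupport (HasCompactSupport.of_compactSpace f)

/-- Continuity of a parametric integral over a compact space. -/
lemma cont_param (μ : Measure T3) [IsFiniteMeasure μ] (F : C(T3 × T3, ℝ)) :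
    Continuous fun y : T3 => ∫ x, F (x, y) ∂μ := by
  refine continuous_of_dominated (bound := fun _ => ‖F‖) ?_ ?_ ?_ ?_
  · intro y
    exact (F.continuous.comp (continuous_id.prodMk continuous_const)).aestronglyMeasurable
  · intro y
    exact Filter.Eventually.of_forall fun x => F.norm_coe_le_norm (x, y)
  · exact integrable_const _
  · exact Filter.Eventually.of_forall fun x =>
      F.continuous.comp (continuous_const.prodMk continuous_id)

section Moll

variable (ρε : C(T3, ℝ))

/-- The mollification of a continuous function. -/
def mollify (g : C(T3, ℝ)) : C(T3, ℝ) :=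
  ⟨fun y => ∫ x, g x * ρε (x - y), by
    exact cont_param volume ⟨fun p => g p.1 * ρε (p.1 - p.2),
      (g.continuous.comp continuous_fst).mul
        (ρε.continuous.comp (continuous_fst.sub continuous_snd))⟩⟩

lemma mollify_apply (g : C(T3, ℝ)) (y : T3) :
    mollify ρε g y = ∫ x, g x * ρε (x - y) := rfl

/-- Fubini: pairing a function against the mollified measure equals pairing the
mollified function against the measure. -/
lemma moll_pair (g : C(T3, ℝ)) (μ : Measure T3) [IsFiniteMeasure μ] :
    ∫ x, g x * (∫ y, ρε (x - y) ∂μ) = ∫ y, mollify ρε g y ∂μ := by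
  have hint : Integrable (Function.uncurry fun x y => g x * ρε (x - y))
      ((volume : Measure T3).prod μ) := by
    have hc : Continuous (Function.uncurry fun x y => g x * ρε (x - y)) :=
      (g.continuous.comp continuous_fst).mul
        (ρε.continuous.comp (continuous_fst.sub continuous_snd))
    exact hc.integrable_of_hasCompactSupport (HasCompactSupport.of_compactSpace _)
  have h1 : ∀ x : T3, g x * (∫ y, ρε (x - y) ∂μ) = ∫ y, g x * ρε (x - y) ∂μ := by
    intro x
    exact (integral_const_mul (g x) _).symm
  simp_rw [h1, mollify_apply]
  exact integral_integral_swap hint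

/-- The mass of the shifted mollifier is 1. -/
lemma moll_mass (hmass : ∫ x, ρε x = 1) (y : T3) : ∫ x, ρε (x - y) = 1 := by
  rw [integral_sub_right_eq_self (fun x => ρε x) y]; exact hmass

/-- Jensen's inequality for the square function against the mollifier. -/
lemma moll_jensen (hpos : ∀ x, 0 < ρε x) (hmass : ∫ x, ρε x = 1)
    (f : C(T3, ℝ)) (y : T3) :
    (∫ x, f x * ρε (x - y)) ^ 2 ≤ ∫ x, (f x) ^ 2 * ρε (x - y) := by
  set w : T3 → ℝ := fun x => ρε (x - y) with hw
  have hwc : Continuous w := ρε.continuous.comp (continuous_id.sub continuous_const)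
  set m : ℝ := ∫ x, f x * w x with hm
  have h1 : Integrable (fun x => (f x) ^ 2 * w x) volume :=
    contIntegrable ((f.continuous.pow 2).mul hwc) volume
  have h2 : Integrable (fun x => f x * w x) volume :=
    contIntegrable (f.continuous.mul hwc) volume
  have h3 : Integrable w volume := contIntegrable hwc volume
  have key : (0:ℝ) ≤ ∫ x, (f x - m) ^ 2 * w x := by
    refine integral_nonneg fun x => mul_nonneg (sq_nonneg _) (hpos _).le
  have expand : (fun x => (f x - m) ^ 2 * w x)
      = fun x => ((f x) ^ 2 * w x - (2 * m) * (f x * w x)) + m ^ 2 * w x := by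
    funext x; ring
  rw [expand] at key
  have hsub : Integrable (fun x => (f x) ^ 2 * w x - 2 * m * (f x * w x)) volume :=
    h1.sub (h2.const_mul (2 * m))
  have hcm : Integrable (fun x => m ^ 2 * w x) volume := h3.const_mul _
  have hcm2 : Integrable (fun x => 2 * m * (f x * w x)) volume := h2.const_mul _
  rw [integral_add hsub hcm, integral_sub h1 hcm2, integral_const_mul, integral_const_mul,
    moll_mass ρε hmass y, ← hm] at key
  show m ^ 2 ≤ ∫ x, (f x) ^ 2 * w x
  nlinarith [key]

/-- The mollified test functions still satisfy the entropy constraint. -/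
lemma moll_constraint (hpos : ∀ x, 0 < ρε x) (hmass : ∫ x, ρε x = 1)
    (a : C(T3, ℝ)) (A : Fin 4 → C(T3, ℝ))
    (hc : ∀ x, a x + (∑ i, (A i x) ^ 2) / 2 ≤ 0) (y : T3) :
    mollify ρε a y + (∑ i, (mollify ρε (A i) y) ^ 2) / 2 ≤ 0 := by
  set w : T3 → ℝ := fun x => ρε (x - y) with hwdef
  have hwc : Continuous w := ρε.continuous.comp (continuous_id.sub continuous_const)
  have hA2 : ∀ i : Fin 4, Integrable (fun x => (A i x) ^ 2 * w x) volume := fun i =>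
    contIntegrable (((A i).continuous.pow 2).mul hwc) volume
  have haw : Integrable (fun x => a x * w x) volume :=
    contIntegrable (a.continuous.mul hwc) volume
  have hsum : (∑ i, (mollify ρε (A i) y) ^ 2) ≤ ∑ i, ∫ x, (A i x) ^ 2 * w x :=
    Finset.sum_le_sum fun i _ => moll_jensen ρε hpos hmass (A i) y
  have hsum2 : (∑ i, ∫ x, (A i x) ^ 2 * w x) = ∫ x, ∑ i, (A i x) ^ 2 * w x :=
    (integral_finset_sum _ fun i _ => hA2 i).symm
  have hcomb : mollify ρε a y + (∫ x, ∑ i, (A i x) ^ 2 * w x) / 2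
      = ∫ x, (a x + (∑ i, (A i x) ^ 2) / 2) * w x := by
    have expand : (fun x => (a x + (∑ i, (A i x) ^ 2) / 2) * w x)
        = fun x => a x * w x + (∑ i, (A i x) ^ 2 * w x) / 2 := by
      funext x; rw [← Finset.sum_mul]; ring
    rw [expand, integral_add haw ((integrable_finset_sum _ fun i _ => hA2 i).div_const 2),
      integral_div, mollify_apply]
  have hnonpos : ∫ x, (a x + (∑ i, (A i x) ^ 2) / 2) * w x ≤ 0 :=
    integral_nonpos fun x => mul_nonpos_of_nonpos_of_nonneg (hc x) (hpos _).le
  calc mollify ρε a y + (∑ i, (mollify ρε (A i) y) ^ 2) / 2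
      ≤ mollify ρε a y + (∫ x, ∑ i, (A i x) ^ 2 * w x) / 2 := by
        have := hsum.trans_eq hsum2; linarith
    _ = ∫ x, (a x + (∑ i, (A i x) ^ 2) / 2) * w x := hcomb
    _ ≤ 0 := hnonpos

/-- Mollified pairing with a signed measure. -/
lemma moll_pairSM (g : C(T3, ℝ)) (s : SignedMeasure T3) :
    ∫ x, g x * pairSM s (fun y => ρε (x - y))
      = pairSM s (mollify ρε g) := by
  unfold pairSM
  have hcP : Continuous fun x : T3 => ∫ y, ρε (x - y) ∂s.toJordanDecomposition.posPart :=
    cont_param s.toJordanDecomposition.posPart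
      ⟨fun p => ρε (p.2 - p.1), ρε.continuous.comp (continuous_snd.sub continuous_fst)⟩
  have hcN : Continuous fun x : T3 => ∫ y, ρε (x - y) ∂s.toJordanDecomposition.negPart :=
    cont_param s.toJordanDecomposition.negPart
      ⟨fun p => ρε (p.2 - p.1), ρε.continuous.comp (continuous_snd.sub continuous_fst)⟩
  have h1 : Integrable (fun x => g x *
      ∫ y, ρε (x - y) ∂s.toJordanDecomposition.posPart) volume :=
    contIntegrable (g.continuous.mul hcP) volume
  have h2 : Integrable (fun x => g x *
      ∫ y, ρε (x - y) ∂s.toJordanDecomposition.negPart) volume :=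
    contIntegrable (g.continuous.mul hcN) volume
  simp_rw [mul_sub]
  rw [integral_sub h1 h2, moll_pair, moll_pair]

end Moll

/-- mollification does not increase the entropy functional.
Let `h₀` be a nonnegative Borel measure and `U₀` an `ℝ⁴`-valued Borel measure on
`𝕋³`, and let `ρε` be a smooth (here: continuous) positive probability density
on `𝕋³`.  The mollifications are the densities
`h₀^ε(x) = ∫ ρε(x-y) dh₀(y)` and `U₀^ε(x) = ∫ ρε(x-y) dU₀(y)` (with respect to
Haar/Lebesgue measure on `𝕋³`); then `Λ(h₀^ε, U₀^ε) ≤ Λ(h₀, U₀)`. -/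
theorem lam_mollify_le (h0 : Measure T3) [IsFiniteMeasure h0]
    (U0 : Fin 4 → SignedMeasure T3)
    (ρε : C(T3, ℝ)) (hpos : ∀ x, 0 < ρε x) (hmass : ∫ x, ρε x = 1) :
    LamGen (fun f => ∫ x, f x * (∫ y, ρε (x - y) ∂h0))
           (fun i f => ∫ x, f x * pairSM (U0 i) (fun y => ρε (x - y)))
      ≤ Lam h0 U0 := by
  apply sSup_le
  rintro r ⟨a, A, hc, rfl⟩
  apply le_sSup
  refine ⟨mollify ρε a, fun i => mollify ρε (A i),
    moll_constraint ρε hpos hmass a A hc, ?_⟩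
  congr 1
  congr 1
  · exact moll_pair ρε a h0
  · exact Finset.sum_congr rfl fun i _ => moll_pairSM ρε (A i) (U0 i)
end
end

section
/- A priori bound on initial mass from the relative entropy: let h₀ be a nonnegative finite Borel measure on 𝕋³, h₀* ∈ C(𝕋³) with h₀* > 0, and suppose the relative entropy Λ₀ := Λ(h₀, Ũ₀) is finite, where Ũ₀ includes the component L - h₀/h₀* (L the Lebesgue measure) so that in particular ‖L - h₀/h₀*‖²_{TV} ≤ 2Λ₀ ∫ h₀. Then the total mass satisfies ∫_{𝕋³} h₀ ≤ 2(‖h₀*‖²_∞ Λ₀ + ∫_{𝕋³} h₀*). -/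
open MeasureTheory
noncomputable section

/-- Total variation `‖μ - ν‖_TV` of the difference of two (finite) nonnegative
measures, via the Jordan decomposition `|μ-ν| = (μ-ν)⁺ + (μ-ν)⁻`. -/
def TVdiff (μ ν : Measure T3) : ℝ := ((μ - ν) Set.univ).toReal + ((ν - μ) Set.univ).toReal

/-! With `ν = h₀/h₀*`, the mass of `h₀` is `∫ h₀* dν`. The Hahn decomposition gives
`ν ≤ (ν - L) + L`, hence `∫ h₀ ≤ ∫ h₀* dL + ‖h₀*‖_∞ ‖L - ν‖_TV`, and the hypothesis bounds the
total variation by `√(2Λ₀ ∫ h₀)`. Young's inequality then absorbs half of `∫ h₀` into the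
left-hand side. -/

open Set ENNReal

namespace MeasureTheory.Measure

variable {α : Type*} [MeasurableSpace α] {μ ν : Measure α}

theorem le_sub_add [IsFiniteMeasure μ] [IsFiniteMeasure ν] : μ ≤ μ - ν + ν := by
  obtain ⟨s, hs⟩ := exists_isHahnDecomposition μ ν
  have hsm := hs.measurableSet
  calc μ = μ.restrict s + μ.restrict sᶜ := (restrict_add_restrict_compl hsm).symm
    _ ≤ (μ - ν + ν).restrict s + (μ - ν + ν).restrict sᶜ := by
      rw [restrict_add, restrict_add]
      gcongr
      · exact hs.le_on.trans (Measure.le_add_left le_rfl)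
      · rw [restrict_sub_eq_restrict_sub_restrict hsm.compl, sub_add_cancel_of_le hs.ge_on_compl]
    _ = μ - ν + ν := restrict_add_restrict_compl hsm

theorem lintegral_le_lintegral_add_mul_sub_apply_univ [IsFiniteMeasure μ] [IsFiniteMeasure ν]
    {f : α → ℝ≥0∞} {C : ℝ≥0∞} (hf : ∀ x, f x ≤ C) :
    ∫⁻ x, f x ∂μ ≤ ∫⁻ x, f x ∂ν + C * (μ - ν) univ :=
  calc ∫⁻ x, f x ∂μ ≤ ∫⁻ x, f x ∂(μ - ν + ν) := lintegral_mono' le_sub_add le_rfl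
    _ = ∫⁻ x, f x ∂(μ - ν) + ∫⁻ x, f x ∂ν := lintegral_add_measure _ _ _
    _ ≤ C * (μ - ν) univ + ∫⁻ x, f x ∂ν := by
      grw [lintegral_mono hf, lintegral_const]
    _ = _ := add_comm _ _

end MeasureTheory.Measure

theorem MeasureTheory.lintegral_ofReal_withDensity_ofReal_inv {α : Type*} [MeasurableSpace α]
    (μ : Measure α) {f : α → ℝ} (hf : Measurable f) (hpos : ∀ x, 0 < f x) :
    ∫⁻ x, ENNReal.ofReal (f x) ∂μ.withDensity (fun x => ENNReal.ofReal (f x)⁻¹) = μ univ := by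
  have hinv : Measurable fun x => ENNReal.ofReal (f x)⁻¹ := hf.inv.ennreal_ofReal
  rw [lintegral_withDensity_eq_lintegral_mul _ hinv hf.ennreal_ofReal,
    ← lintegral_one]
  congr 1 with x
  rw [Pi.mul_apply, ← ENNReal.ofReal_mul (inv_nonneg.2 (hpos x).le),
    inv_mul_cancel₀ (hpos x).ne', ENNReal.ofReal_one]

theorem ContinuousMap.measure_univ_toReal_le_integral_add_norm_mul
    {X : Type*} [TopologicalSpace X] [CompactSpace X] [MeasurableSpace X] [OpensMeasurableSpace X]
    (μ L : Measure X) [IsFiniteMeasure μ] [IsFiniteMeasure L] (g : C(X, ℝ)) (hg : ∀ x, 0 < g x) :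
    (μ univ).toReal ≤ ∫ x, g x ∂L
      + ‖g‖ * ((μ.withDensity (fun x => ENNReal.ofReal (g x)⁻¹) - L) univ).toReal := by
  set ν := μ.withDensity (fun x => ENNReal.ofReal (g x)⁻¹)
  have hinv : Continuous fun x => (g x)⁻¹ := g.continuous.inv₀ fun x => (hg x).ne'
  have : IsFiniteMeasure ν := isFiniteMeasure_withDensity_ofReal
    (hinv.integrable_of_hasCompactSupport (.of_compactSpace _)).hasFiniteIntegral
  have hbound : ∀ x, ENNReal.ofReal (g x) ≤ ENNReal.ofReal ‖g‖ := fun x =>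
    ENNReal.ofReal_le_ofReal ((le_abs_self _).trans (g.norm_coe_le_norm x))
  have key := Measure.lintegral_le_lintegral_add_mul_sub_apply_univ (μ := ν) (ν := L) hbound
  rw [lintegral_ofReal_withDensity_ofReal_inv μ g.continuous.measurable hg,
    ← ofReal_integral_eq_lintegral_ofReal
      (g.continuous.integrable_of_hasCompactSupport (.of_compactSpace _))
      (.of_forall fun x => (hg x).le)] at key
  have := ENNReal.toReal_mono (by finiteness) key
  rwa [ENNReal.toReal_add (by finiteness) (by finiteness), ENNReal.toReal_mul,
    ENNReal.toReal_ofReal (integral_nonneg fun x => (hg x).le),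
    ENNReal.toReal_ofReal (norm_nonneg _)] at this

theorem le_two_mul_of_le_add_mul_of_sq_le {m I H T Λ : ℝ} (hΛ : 0 ≤ Λ)
    (hm : 0 ≤ m) (hmT : m ≤ I + H * T) (hT : T ^ 2 ≤ 2 * Λ * m) : m ≤ 2 * (H ^ 2 * Λ + I) := by
  have : H * T ≤ H ^ 2 * Λ + m / 2 := by
    nlinarith [sq_nonneg (H ^ 2 * Λ - m / 2), mul_le_mul_of_nonneg_left hT (sq_nonneg H),
      mul_nonneg (sq_nonneg H) hΛ]
  linarith

/-- a priori bound on the initial mass from the relative entropy.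
Let `h₀` be a nonnegative finite Borel measure on `𝕋³`, `h₀* ∈ C(𝕋³)` with
`h₀* > 0`, and suppose the (finite, nonnegative) relative entropy `Λ₀` satisfies
`‖L - h₀/h₀*‖²_TV ≤ 2Λ₀ ∫h₀` (Cauchy–Schwarz for the entropy functional), where
`h₀/h₀*` is the measure with density `(h₀*)⁻¹` with respect to `h₀`.  Then
`∫_{𝕋³} h₀ ≤ 2(‖h₀*‖²_∞ Λ₀ + ∫_{𝕋³} h₀*)`. -/
theorem mass_bound_from_relative_entropy (h0 : Measure T3) [IsFiniteMeasure h0]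
    (hstar : C(T3, ℝ)) (hpos : ∀ x, 0 < hstar x)
    (Λ0 : ℝ) (hΛ0 : 0 ≤ Λ0)
    (hTV : (TVdiff (volume : Measure T3)
        (h0.withDensity fun x => ENNReal.ofReal (hstar x)⁻¹))^2
      ≤ 2 * Λ0 * (h0 Set.univ).toReal) :
    (h0 Set.univ).toReal ≤ 2 * (‖hstar‖^2 * Λ0 + ∫ x, hstar x) := by
  refine le_two_mul_of_le_add_mul_of_sq_le hΛ0 toReal_nonneg ?_ hTV
  refine (hstar.measure_univ_toReal_le_integral_add_norm_mul h0 volume hpos).trans ?_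
  gcongr
  exact le_add_of_nonneg_left toReal_nonneg
end
end
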